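/- Let n and s be positive integers with 1 ≤ s < n and gcd(n, s+1) = 1, and let F(X) = X^{2^n − 2^s} on F_{2^n}. Let a, b ∈ F_{2^n}^* with a ≠ b and a·b^{2^s} + a^{2^s}·b ≠ 0. Set B = b/a and A = (B^{2^{n−s}} + B)/(B^2 + B) (the denominator is nonzero since B ≠ 0, 1). Then ∇_F(a,b) = #{Y ∈ F_{2^n} : Y^{2^{n−s}} + A·Y^2 + (1+A)·Y = 0} − 4; in particular the set of roots of this linearized trinomial contains the four distinct elements 0, 1, B, B+1, none of which yields a solution of the original second-order zero differential equation. -/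

import Mathlib

open Finset

/-- Second-order zero differential spectrum of `f` at `(a, b)`:
the number of `X` with `f(X+a+b) - f(X+b) - f(X+a) + f(X) = 0`. -/
def sozdSpec {K : Type*} [Field K] [Fintype K] [DecidableEq K] (f : K → K) (a b : K) : ℕ :=
  (Finset.univ.filter fun X : K => f (X + a + b) - f (X + b) - f (X + a) + f X = 0).card

/-- DDT entry of `f` at `(a, b)`: the number of `X` with `f(X+a) - f(X) = b`. -/
def ddtEntry {K : Type*} [Field K] [Fintype K] [DecidableEq K] (f : K → K) (a b : K) : ℕ :=
  (Finset.univ.filter fun X : K => f (X + a) - f X = b).card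

/-- Differential uniformity of `f`: `max {Δ_f(a,b) : a ≠ 0, b}`. -/
def diffUnif {K : Type*} [Field K] [Fintype K] [DecidableEq K] (f : K → K) : ℕ :=
  Finset.sup ((Finset.univ.filter fun a : K => a ≠ 0) ×ˢ Finset.univ)
    fun ab => ddtEntry f ab.1 ab.2

/-- Second-order zero differential uniformity (odd characteristic):
`max {∇_f(a,b) : a ≠ 0, b ≠ 0}`. -/
def sozdUnifOdd {K : Type*} [Field K] [Fintype K] [DecidableEq K] (f : K → K) : ℕ :=
  Finset.sup ((Finset.univ.filter fun a : K => a ≠ 0) ×ˢ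
      (Finset.univ.filter fun b : K => b ≠ 0))
    fun ab => sozdSpec f ab.1 ab.2

/-!
Since `F` is homogeneous, `X ↦ aX` identifies `∇_F(a, b)` with `∇_F(1, B)`. In characteristic 2
the second difference is constant on each coset of `{0, a, b, a + b}`; on the coset of `0` it is
`a^e + b^e + (a + b)^e` (`e = 2^n - 2^s`), and multiplying by `(a b (a + b))^{2^s}` turns this
into `a b^{2^{s+1}} + a^{2^{s+1}} b`, whose vanishing would make `a / b ≠ 0, 1` a fixed point of
`x ↦ x^{2^{s+1}}`, impossible since `gcd(n, s + 1) = 1`.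
Elsewhere, raising to the bijective power `r = 2^{n-s}` turns each `X^e` into `X^{r-1}`;
multiplying by `y (y + 1) (y + B) (y + B + 1)` and using additivity of `y ↦ y^r` yields
`(B^2 + B) (y^r + A y^2 + (1 + A) y)`.
-/

def secondDiff {R : Type*} [Ring R] (f : R → R) (a b X : R) : R :=
  f (X + a + b) - f (X + b) - f (X + a) + f X

theorem secondDiff_comm {R : Type*} [Ring R] (f : R → R) (a b : R) :
    secondDiff f a b = secondDiff f b a := by
  ext X
  simp only [secondDiff, add_right_comm X a b]
  abel

theorem sozdSpec_eq_card_filter_secondDiff {K : Type*} [Field K] [Fintype K] [DecidableEq K]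
    (f : K → K) (a b : K) : sozdSpec f a b = #{X | secondDiff f a b X = 0} := rfl

section CharTwo

variable {R : Type*} [CommRing R] [CharP R 2]

theorem secondDiff_add_left (f : R → R) (a b X : R) :
    secondDiff f a b (X + a) = secondDiff f a b X := by
  have hXaa : X + a + a = X := by rw [add_assoc, CharTwo.add_self_eq_zero, add_zero]
  simp only [secondDiff, CharTwo.sub_eq_add, hXaa]
  abel

theorem secondDiff_eq_of_mem [DecidableEq R] (f : R → R) {a b X : R}
    (hX : X ∈ ({0, a, b, a + b} : Finset R)) : secondDiff f a b X = secondDiff f a b 0 := by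
  have hb : secondDiff f a b (0 + b) = secondDiff f a b 0 := by
    rw [secondDiff_comm]; exact secondDiff_add_left f b a 0
  simp only [mem_insert, mem_singleton] at hX
  rcases hX with rfl | rfl | rfl | rfl
  · rfl
  · simpa using secondDiff_add_left f X b 0
  · simpa using hb
  · rw [show a + b = 0 + b + a by abel, secondDiff_add_left, hb]

theorem mul_sum_pow_two_pow_sub_one (k : ℕ) (y B : R) :
    y * (y + 1) * (y + B) * (y + B + 1) * (y ^ (2 ^ k - 1) + (y + 1) ^ (2 ^ k - 1) +
      (y + B) ^ (2 ^ k - 1) + (y + B + 1) ^ (2 ^ k - 1)) =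
    (B ^ 2 + B) * y ^ 2 ^ k + (B ^ 2 ^ k + B) * y ^ 2 + (B ^ 2 ^ k + B ^ 2) * y := by
  have hmul (t : R) : t ^ (2 ^ k - 1) * t = t ^ 2 ^ k := pow_sub_one_mul (by positivity) t
  have frob (x z : R) : (x + z) ^ 2 ^ k = x ^ 2 ^ k + z ^ 2 ^ k := add_pow_char_pow ..
  calc _ = y ^ 2 ^ k * ((y + 1) * (y + B) * (y + B + 1)) +
        (y + 1) ^ 2 ^ k * (y * (y + B) * (y + B + 1)) +
        (y + B) ^ 2 ^ k * (y * (y + 1) * (y + B + 1)) +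
        (y + B + 1) ^ 2 ^ k * (y * (y + 1) * (y + B)) := by
          rw [← hmul y, ← hmul (y + 1), ← hmul (y + B), ← hmul (y + B + 1)]; ring
    _ = _ := by rw [frob (y + B), frob y, frob y, one_pow]; grind

theorem trinomial_eq_zero_of_mem [DecidableEq R] (k : ℕ) {A B y : R}
    (hA : A * (B ^ 2 + B) = B ^ 2 ^ k + B) (hy : y ∈ ({0, 1, B, B + 1} : Finset R)) :
    y ^ 2 ^ k + A * y ^ 2 + (1 + A) * y = 0 := by
  simp only [mem_insert, mem_singleton] at hy
  rcases hy with rfl | rfl | rfl | rfl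
  · simp
  · rw [one_pow, one_pow]; grind
  · grind
  · rw [add_pow_char_pow, one_pow]; grind

theorem sq_add_self_ne_zero [IsDomain R] {B : R} (hB0 : B ≠ 0) (hB1 : B ≠ 1) :
    B ^ 2 + B ≠ 0 := by
  rw [show B ^ 2 + B = B * (B + 1) by ring]
  exact mul_ne_zero hB0 (by rwa [Ne, CharTwo.add_eq_zero])

theorem card_zero_one_self_self_add_one [Nontrivial R] [DecidableEq R] {B : R} (hB0 : B ≠ 0)
    (hB1 : B ≠ 1) : ({0, 1, B, B + 1} : Finset R).card = 4 := by
  have h1 : B + 1 ≠ 1 := by simpa using hB0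
  have h0 : B + 1 ≠ 0 := by rwa [Ne, CharTwo.add_eq_zero]
  rw [card_insert_of_notMem, card_insert_of_notMem, card_insert_of_notMem, card_singleton] <;>
    simp [hB0.symm, hB1.symm, h0.symm, h1.symm]

end CharTwo

section FiniteField

variable {K : Type*} [Field K] [Fintype K] {n : ℕ}

theorem eq_zero_or_eq_one_of_pow_two_pow_eq_self (hcard : Fintype.card K = 2 ^ n) {m : ℕ}
    (hmn : Nat.gcd m n = 1) {z : K} (hz : z ^ 2 ^ m = z) : z = 0 ∨ z = 1 := by
  refine or_iff_not_imp_left.mpr fun hz0 => ?_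
  have hm : z ^ (2 ^ m - 1) = 1 :=
    mul_right_cancel₀ hz0 (by rw [pow_sub_one_mul (by positivity), hz, one_mul])
  have hn : z ^ (2 ^ n - 1) = 1 := hcard ▸ FiniteField.pow_card_sub_one_eq_one z hz0
  simpa [hmn] using pow_gcd_eq_one.mpr ⟨hm, hn⟩

theorem pow_two_pow_sub_mul_pow (hcard : Fintype.card K = 2 ^ n) {s : ℕ} (hsn : s ≤ n) (x : K) :
    x ^ (2 ^ n - 2 ^ s) * x ^ 2 ^ s = x := by
  rw [← pow_add, Nat.sub_add_cancel (Nat.pow_le_pow_right two_pos hsn), ← hcard,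
    FiniteField.pow_card]

theorem pow_two_pow_sub_pow_two_pow_sub (hcard : Fintype.card K = 2 ^ n) {s : ℕ} (hsn : s ≤ n)
    (x : K) : (x ^ (2 ^ n - 2 ^ s)) ^ 2 ^ (n - s) = x ^ (2 ^ (n - s) - 1) := by
  have he : (2 ^ n - 2 ^ s) * 2 ^ (n - s) = 2 ^ n * (2 ^ (n - s) - 1) := by
    rw [Nat.sub_mul, Nat.mul_sub, mul_one, ← pow_add 2 s, Nat.add_sub_cancel' hsn]
  rw [← pow_mul, he, pow_mul, ← hcard, FiniteField.pow_card]

end FiniteField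

section Homogeneity

variable {K : Type*} [Field K]

theorem secondDiff_pow_mul (e : ℕ) {a : K} (ha : a ≠ 0) (b Y : K) :
    secondDiff (· ^ e) a b (a * Y) = a ^ e * secondDiff (· ^ e) 1 (b / a) Y := by
  have h1 : a * Y + a + b = a * (Y + 1 + b / a) := by field_simp
  have h2 : a * Y + b = a * (Y + b / a) := by field_simp
  have h3 : a * Y + a = a * (Y + 1) := by ring
  simp only [secondDiff]
  rw [h1, h2, h3]
  simp only [mul_pow]
  ring

theorem sozdSpec_pow_eq_sozdSpec_one_div [Fintype K] [DecidableEq K] (e : ℕ) {a : K}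
    (ha : a ≠ 0) (b : K) : sozdSpec (· ^ e) a b = sozdSpec (· ^ e) 1 (b / a) := by
  have key (Y : K) :
      secondDiff (· ^ e) a b (a * Y) = 0 ↔ secondDiff (· ^ e) 1 (b / a) Y = 0 := by
    rw [secondDiff_pow_mul e ha, mul_eq_zero, or_iff_right (pow_ne_zero e ha)]
  simp only [sozdSpec_eq_card_filter_secondDiff]
  refine card_nbij' (· / a) (a * ·) (fun X hX => ?_) (fun Y hY => ?_)
    (fun X _ => mul_div_cancel₀ X ha) (fun Y _ => mul_div_cancel_left₀ Y ha)
  · simp only [mem_coe, mem_filter, mem_univ, true_and] at hX ⊢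
    rwa [← key, mul_div_cancel₀ X ha]
  · simp only [mem_coe, mem_filter, mem_univ, true_and] at hY ⊢
    rwa [key]

end Homogeneity

section PowerMap

variable {K : Type*} [Field K] [Fintype K] [CharP K 2] {n s : ℕ}

theorem pow_add_pow_add_add_pow_ne_zero (hcard : Fintype.card K = 2 ^ n) (hsn : s ≤ n)
    (hgcd : Nat.gcd n (s + 1) = 1) {a b : K} (ha : a ≠ 0) (hb : b ≠ 0) (hab : a ≠ b) :
    a ^ (2 ^ n - 2 ^ s) + b ^ (2 ^ n - 2 ^ s) + (a + b) ^ (2 ^ n - 2 ^ s) ≠ 0 := by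
  intro h
  have hq (x : K) := pow_two_pow_sub_mul_pow hcard hsn x
  have hfrob : (a + b) ^ 2 ^ s = a ^ 2 ^ s + b ^ 2 ^ s := add_pow_char_pow ..
  have hab2 : a * (b ^ 2 ^ s) ^ 2 = (a ^ 2 ^ s) ^ 2 * b := by
    have := congrArg (· * (a ^ 2 ^ s * b ^ 2 ^ s * (a + b) ^ 2 ^ s)) h
    grind
  have hz : (a / b) ^ 2 ^ (s + 1) = a / b := by
    rw [div_pow, div_eq_div_iff (pow_ne_zero _ hb) hb, pow_succ, pow_mul, pow_mul]
    exact hab2.symm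
  rcases eq_zero_or_eq_one_of_pow_two_pow_eq_self hcard (Nat.gcd_comm n _ ▸ hgcd) hz with h | h
  · exact ha (div_eq_zero_iff.mp h |>.resolve_right hb)
  · exact hab ((div_eq_one_iff_eq hb).mp h)

theorem secondDiff_pow_ne_zero_of_mem [DecidableEq K] (hcard : Fintype.card K = 2 ^ n)
    (hsn : s < n) (hgcd : Nat.gcd n (s + 1) = 1) {a b X : K} (ha : a ≠ 0) (hb : b ≠ 0)
    (hab : a ≠ b) (hX : X ∈ ({0, a, b, a + b} : Finset K)) :
    secondDiff (· ^ (2 ^ n - 2 ^ s)) a b X ≠ 0 := by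
  have he : 2 ^ n - 2 ^ s ≠ 0 := Nat.sub_ne_zero_of_lt (Nat.pow_lt_pow_right one_lt_two hsn)
  rw [secondDiff_eq_of_mem _ hX]
  simp only [secondDiff, zero_add, zero_pow he, add_zero, CharTwo.sub_eq_add]
  exact fun h => pow_add_pow_add_add_pow_ne_zero hcard hsn.le hgcd ha hb hab
    (by linear_combination h)

theorem secondDiff_pow_one_eq_zero_iff (hcard : Fintype.card K = 2 ^ n) (hsn : s ≤ n)
    {A B y : K} (hB : B ^ 2 + B ≠ 0) (hA : A * (B ^ 2 + B) = B ^ 2 ^ (n - s) + B)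
    (hy : y * (y + 1) * (y + B) * (y + B + 1) ≠ 0) :
    secondDiff (· ^ (2 ^ n - 2 ^ s)) 1 B y = 0 ↔
      y ^ 2 ^ (n - s) + A * y ^ 2 + (1 + A) * y = 0 := by
  have hpow : secondDiff (· ^ (2 ^ n - 2 ^ s)) 1 B y ^ 2 ^ (n - s) =
      y ^ (2 ^ (n - s) - 1) + (y + 1) ^ (2 ^ (n - s) - 1) + (y + B) ^ (2 ^ (n - s) - 1) +
        (y + B + 1) ^ (2 ^ (n - s) - 1) := by
    simp only [secondDiff, CharTwo.sub_eq_add, add_pow_char_pow,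
      pow_two_pow_sub_pow_two_pow_sub hcard hsn, add_right_comm y 1 B]
    ring
  have htri : (B ^ 2 + B) * (y ^ 2 ^ (n - s) + A * y ^ 2 + (1 + A) * y) =
      (B ^ 2 + B) * y ^ 2 ^ (n - s) + (B ^ 2 ^ (n - s) + B) * y ^ 2 +
        (B ^ 2 ^ (n - s) + B ^ 2) * y := by
    grind
  calc _ ↔ secondDiff (· ^ (2 ^ n - 2 ^ s)) 1 B y ^ 2 ^ (n - s) = 0 :=
        (pow_eq_zero_iff (by positivity)).symm
    _ ↔ (B ^ 2 + B) * (y ^ 2 ^ (n - s) + A * y ^ 2 + (1 + A) * y) = 0 := by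
        rw [hpow, htri, ← mul_sum_pow_two_pow_sub_one, mul_eq_zero, or_iff_right hy]
    _ ↔ _ := by rw [mul_eq_zero, or_iff_right hB]

theorem sozdSpec_pow_one_eq_card_sdiff [DecidableEq K] (hcard : Fintype.card K = 2 ^ n)
    (hsn : s < n) (hgcd : Nat.gcd n (s + 1) = 1) {A B : K} (hB0 : B ≠ 0) (hB1 : B ≠ 1)
    (hA : A * (B ^ 2 + B) = B ^ 2 ^ (n - s) + B) :
    sozdSpec (· ^ (2 ^ n - 2 ^ s)) 1 B =
      #(({Y | Y ^ 2 ^ (n - s) + A * Y ^ 2 + (1 + A) * Y = 0} : Finset K) \ {0, 1, B, B + 1}) := by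
  rw [sozdSpec_eq_card_filter_secondDiff]
  congr 1
  ext y
  simp only [mem_filter, mem_univ, true_and, mem_sdiff]
  by_cases hy : y ∈ ({0, 1, B, B + 1} : Finset K)
  · have hy' : y ∈ ({0, 1, B, 1 + B} : Finset K) := by rwa [add_comm 1 B]
    simpa [hy] using secondDiff_pow_ne_zero_of_mem hcard hsn hgcd one_ne_zero hB0 hB1.symm hy'
  · have hprod : y * (y + 1) * (y + B) * (y + B + 1) ≠ 0 := by
      simp only [mem_insert, mem_singleton, not_or] at hy
      simp [CharTwo.add_eq_zero, add_assoc, hy]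
    simpa [hy] using
      secondDiff_pow_one_eq_zero_iff hcard hsn.le (sq_add_self_ne_zero hB0 hB1) hA hprod

end PowerMap

theorem sozd_inverse_like_main_case_general
    {n s : ℕ} (hsn : s < n) (hgcd : Nat.gcd n (s + 1) = 1)
    {K : Type*} [Field K] [Fintype K] [DecidableEq K] [CharP K 2]
    (hcard : Fintype.card K = 2 ^ n)
    (a b : K) (ha : a ≠ 0) (hb : b ≠ 0) (hab : a ≠ b)
    (B : K) (hB : B = b / a)
    (A : K) (hA : A = (B ^ 2 ^ (n - s) + B) / (B ^ 2 + B))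
    (R : Finset K)
    (hR : R = Finset.univ.filter fun Y : K =>
      Y ^ 2 ^ (n - s) + A * Y ^ 2 + (1 + A) * Y = 0) :
    ({0, 1, B, B + 1} : Finset K) ⊆ R ∧
    ({0, 1, B, B + 1} : Finset K).card = 4 ∧
    (∀ X ∈ ({0, a, b, a + b} : Finset K),
      (X + a + b) ^ (2 ^ n - 2 ^ s) - (X + b) ^ (2 ^ n - 2 ^ s) -
        (X + a) ^ (2 ^ n - 2 ^ s) + X ^ (2 ^ n - 2 ^ s) ≠ 0) ∧
    sozdSpec (fun X : K => X ^ (2 ^ n - 2 ^ s)) a b = R.card - 4 := by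
  have hB0 : B ≠ 0 := hB ▸ div_ne_zero hb ha
  have hB1 : B ≠ 1 := hB ▸ fun h => hab ((div_eq_one_iff_eq ha).mp h).symm
  have hA' : A * (B ^ 2 + B) = B ^ 2 ^ (n - s) + B := by
    rw [hA, div_mul_cancel₀ _ (sq_add_self_ne_zero hB0 hB1)]
  have hsub : ({0, 1, B, B + 1} : Finset K) ⊆ R := fun y hy =>
    hR ▸ mem_filter.mpr ⟨mem_univ y, trinomial_eq_zero_of_mem _ hA' hy⟩
  have hcard4 := card_zero_one_self_self_add_one hB0 hB1
  refine ⟨hsub, hcard4, fun _ hX => secondDiff_pow_ne_zero_of_mem hcard hsn hgcd ha hb hab hX,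
    ?_⟩
  rw [sozdSpec_pow_eq_sozdSpec_one_div _ ha, ← hB,
    sozdSpec_pow_one_eq_card_sdiff hcard hsn hgcd hB0 hB1 hA', ← hR, card_sdiff_of_subset hsub,
    hcard4]

/-- For `F(X) = X^{2^n - 2^s}` over `F_{2^n}` with `gcd(n, s+1) = 1`, `a, b ≠ 0`,
`a ≠ b`, and `a·b^{2^s} + a^{2^s}·b ≠ 0`: with `B = b/a` and
`A = (B^{2^{n-s}} + B)/(B² + B)`, the value `∇_F(a,b)` is the number of roots of the
linearized trinomial `Y^{2^{n-s}} + A·Y² + (1+A)·Y` minus `4`; the root set contains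
the four distinct elements `0, 1, B, B+1`, none of which yields a solution of the
original second-order zero differential equation. -/
theorem sozd_inverse_like_main_case
    {n s : ℕ} (hs : 1 ≤ s) (hsn : s < n) (hgcd : Nat.gcd n (s + 1) = 1)
    {K : Type*} [Field K] [Fintype K] [DecidableEq K] [CharP K 2]
    (hcard : Fintype.card K = 2 ^ n)
    (a b : K) (ha : a ≠ 0) (hb : b ≠ 0) (hab : a ≠ b)
    (hnd : a * b ^ 2 ^ s + a ^ 2 ^ s * b ≠ 0)
    (B : K) (hB : B = b / a)
    (A : K) (hA : A = (B ^ 2 ^ (n - s) + B) / (B ^ 2 + B))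
    (R : Finset K)
    (hR : R = Finset.univ.filter fun Y : K =>
      Y ^ 2 ^ (n - s) + A * Y ^ 2 + (1 + A) * Y = 0) :
    ({0, 1, B, B + 1} : Finset K) ⊆ R ∧
    ({0, 1, B, B + 1} : Finset K).card = 4 ∧
    (∀ X ∈ ({0, a, b, a + b} : Finset K),
      (X + a + b) ^ (2 ^ n - 2 ^ s) - (X + b) ^ (2 ^ n - 2 ^ s) -
        (X + a) ^ (2 ^ n - 2 ^ s) + X ^ (2 ^ n - 2 ^ s) ≠ 0) ∧
    sozdSpec (fun X : K => X ^ (2 ^ n - 2 ^ s)) a b = R.card - 4 :=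
  sozd_inverse_like_main_case_general hsn hgcd hcard a b ha hb hab B hB A hA R hR
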